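/- Let v = (v₁,…,v_r) ∈ (ℤ/2ℤ)^r, r ≥ 3. Then the stabilizer S(v) = {M ∈ GL_r(ℤ/2ℤ) : v·M = v} is generated by the elementary matrices X_{ij} (i ≠ j) with v_i = 0 together with the double elementary matrices X_{ik}·X_{jk} for pairwise distinct i,j,k with v_i = v_j = 1. -/

import Mathlib

/-- The elementary matrix `X i j` over `ℤ/2ℤ`: identity plus an extra 1 in position (i,j). -/
def X {r : ℕ} (i j : Fin r) (h : i ≠ j) : Matrix.SpecialLinearGroup (Fin r) (ZMod 2) :=
  ⟨Matrix.transvection i j 1, Matrix.det_transvection_of_ne i j h 1⟩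

/-- The stabilizer of the row vector `v` in `GL_r(ℤ/2ℤ)` under right multiplication. -/
def S {r : ℕ} (v : Fin r → ZMod 2) : Subgroup (GL (Fin r) (ZMod 2)) where
  carrier := {M | Matrix.vecMul v (M : Matrix (Fin r) (Fin r) (ZMod 2)) = v}
  one_mem' := by simp
  mul_mem' := by
    intro a b ha hb
    simp only [Set.mem_setOf_eq] at *
    rw [Units.val_mul, ← Matrix.vecMul_vecMul, ha, hb]
  inv_mem' := by
    intro a ha
    simp only [Set.mem_setOf_eq] at *
    conv_lhs => rw [← ha, Matrix.vecMul_vecMul, ← Units.val_mul, mul_inv_cancel,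
      Units.val_one, Matrix.vecMul_one]

/-!
Write `e i` for `Pi.single i 1` and `transvec x y = 1 + x yᵀ`: for `y ⬝ᵥ x = 0` this is a
transvection, and it fixes the row vector `v` iff `v ⬝ᵥ x = 0`.

Every `M ∈ S v` is a product of such `v`-fixing transvections. For `v = 0` this is the
generation of `GL_r(𝔽₂) = SL_r(𝔽₂)` by elementary transvections. Otherwise pick `p` with
`v p = 1`: the involution `g = transvec (e p) (v + e p)` exchanges `v` and `e p`, so `g M g`
fixes `e p`, and after one more `e p`-fixing transvection it becomes `diag(1, A)` (coordinate `p`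
split off) with `A ∈ GL_{r-1}(𝔽₂)`, a product of elementary transvections.

Conversely every `v`-fixing transvection lies in the group generated by the `X i j` and
`X i k * X j k`. Since `transvec x (y + y') = transvec x y * transvec x y'` when `y ⬝ᵥ x = 0`,
and symmetrically in `x`, it suffices to treat `y = e m` with `x m = 0`, a product of
generators, and `y = e a + e b` with `x a = x b = 1`. The latter splits off
`transvec (e a + e b) (e a + e b)` (the transposition of `a` and `b`) or
`transvec (e a + e b + e c) (e a + e b)`, both built from generators by conjugation; for
`v a = v b = 1` the transposition needs a third coordinate, which is where `r ≥ 3` enters.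
-/

open Matrix

lemma ZMod.eq_zero_or_eq_one_of_two (a : ZMod 2) : a = 0 ∨ a = 1 := by
  revert a
  decide

namespace Matrix

section Transvec

variable {n R : Type*} [DecidableEq n] [CommRing R]

/-- A transvection when `y ⬝ᵥ x = 0`. -/
def transvec (x y : n → R) : Matrix n n R := 1 + vecMulVec x y

@[simp] lemma transvec_zero_left (y : n → R) : transvec 0 y = 1 := by simp [transvec]

@[simp] lemma transvec_zero_right (x : n → R) : transvec x 0 = 1 := by simp [transvec]

lemma transvection_eq_transvec (i j : n) (c : R) :
    transvection i j c = transvec (Pi.single i c) (Pi.single j 1) := by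
  ext a b
  simp only [transvection, transvec, add_apply, single_apply, vecMulVec_apply, Pi.single_apply]
  split_ifs <;> simp_all

variable [Fintype n]

lemma transvec_mul_transvec {x y x' y' : n → R} (h : y ⬝ᵥ x' = 0) :
    transvec x y * transvec x' y' = 1 + vecMulVec x y + vecMulVec x' y' := by
  simp only [transvec, add_mul, mul_add, one_mul, mul_one, vecMulVec_mul_vecMulVec, h, zero_smul,
    vecMulVec_zero]
  abel

lemma transvec_mul_transvec_add_left {x x' y : n → R} (h : y ⬝ᵥ x' = 0) :
    transvec x y * transvec x' y = transvec (x + x') y := by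
  rw [transvec_mul_transvec h, transvec, add_vecMulVec, add_assoc]

lemma transvec_mul_transvec_add_right {x y y' : n → R} (h : y ⬝ᵥ x = 0) :
    transvec x y * transvec x y' = transvec x (y + y') := by
  rw [transvec_mul_transvec h, transvec, vecMulVec_add, add_assoc]

lemma vecMul_transvec (w x y : n → R) : w ᵥ* transvec x y = w + (w ⬝ᵥ x) • y := by
  rw [transvec, vecMul_add, vecMul_one, vecMul_vecMulVec]

lemma transvec_mulVec (x y w : n → R) : transvec x y *ᵥ w = w + (y ⬝ᵥ w) • x := by
  rw [transvec, add_mulVec, one_mulVec, vecMulVec_mulVec, op_smul_eq_smul]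

lemma mul_transvec_mul {A B : Matrix n n R} (h : A * B = 1) (x y : n → R) :
    A * transvec x y * B = transvec (A *ᵥ x) (y ᵥ* B) := by
  rw [transvec, mul_add, add_mul, mul_one, h, mul_vecMulVec, vecMulVec_mul, transvec]

lemma transvec_sum_left_mem {P : Submonoid (Matrix n n R)} {ι : Type*} (s : Finset ι)
    (f : ι → n → R) {y : n → R} (h : ∀ i ∈ s, y ⬝ᵥ f i = 0 ∧ transvec (f i) y ∈ P) :
    transvec (∑ i ∈ s, f i) y ∈ P :=
  (Finset.sum_induction f (fun x => y ⬝ᵥ x = 0 ∧ transvec x y ∈ P)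
    (fun _ _ ha hb => ⟨by rw [dotProduct_add, ha.1, hb.1, add_zero],
      transvec_mul_transvec_add_left hb.1 ▸ P.mul_mem ha.2 hb.2⟩)
    ⟨dotProduct_zero y, by simp⟩ h).2

lemma transvec_sum_right_mem {P : Submonoid (Matrix n n R)} {ι : Type*} (s : Finset ι)
    (f : ι → n → R) {x : n → R} (h : ∀ i ∈ s, f i ⬝ᵥ x = 0 ∧ transvec x (f i) ∈ P) :
    transvec x (∑ i ∈ s, f i) ∈ P :=
  (Finset.sum_induction f (fun y => y ⬝ᵥ x = 0 ∧ transvec x y ∈ P)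
    (fun _ _ ha hb => ⟨by rw [add_dotProduct, ha.1, hb.1, add_zero],
      transvec_mul_transvec_add_right ha.1 ▸ P.mul_mem ha.2 hb.2⟩)
    ⟨zero_dotProduct x, by simp⟩ h).2

lemma sum_smul_single_add_smul_of_dotProduct_eq_zero {x y : n → R} (h : x ⬝ᵥ y = 0)
    (w : n → R) : ∑ m, x m • (Pi.single m 1 + y m • w) = x := by
  simp only [smul_add, smul_smul, Finset.sum_add_distrib, ← Finset.sum_smul, ← pi_eq_sum_univ' x]
  rw [← dotProduct, h, zero_smul, add_zero]

/-- The transvections fixing the row vector `v`. -/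
def transvecsFixing (v : n → R) : Set (Matrix n n R) :=
  {A | ∃ x y, y ⬝ᵥ x = 0 ∧ v ⬝ᵥ x = 0 ∧ A = transvec x y}

lemma mul_mem_closure_transvecsFixing_mul {A B N : Matrix n n R} (h : A * B = 1) {v : n → R}
    (hN : N ∈ Submonoid.closure (transvecsFixing (v ᵥ* A))) :
    A * N * B ∈ Submonoid.closure (transvecsFixing v) := by
  have hBA : B * A = 1 := mul_eq_one_comm.1 h
  induction hN using Submonoid.closure_induction with
  | mem _ hT =>
    obtain ⟨x, y, hyx, hvx, rfl⟩ := hT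
    refine Submonoid.subset_closure ⟨A *ᵥ x, y ᵥ* B, ?_, ?_, mul_transvec_mul h x y⟩
    · rw [← dotProduct_mulVec, mulVec_mulVec, hBA, one_mulVec, hyx]
    · rwa [dotProduct_mulVec]
  | one => simp [h]
  | mul N₁ N₂ _ _ h₁ h₂ =>
    convert mul_mem h₁ h₂ using 1
    calc A * (N₁ * N₂) * B = A * N₁ * (B * A) * N₂ * B := by simp [hBA, Matrix.mul_assoc]
      _ = _ := by simp only [Matrix.mul_assoc]

end Transvec

section ExtendAt

variable {n R : Type*} [Fintype n] [DecidableEq n] [CommRing R] (p : n)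

/-- `A ↦ diag(A, 1)`, the extra coordinate being `p`. -/
def extendAt : Matrix {i // i ≠ p} {i // i ≠ p} R →* Matrix n n R where
  toFun A := reindexAlgEquiv R R (Equiv.sumCompl (· ≠ p)) (fromBlocks A 0 0 1)
  map_one' := by simp [fromBlocks_one]
  map_mul' A B := by simp [fromBlocks_multiply]

lemma extendAt_transvectionStruct (t : TransvectionStruct {i // i ≠ p} R) :
    extendAt p t.toMatrix = transvection (t.i : n) t.j t.c := by
  change reindexAlgEquiv R R _ (fromBlocks t.toMatrix 0 0 1) = _
  rw [← TransvectionStruct.toMatrix_sumInl, ← TransvectionStruct.toMatrix_reindexEquiv]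
  rfl

lemma det_extendAt (A : Matrix {i // i ≠ p} {i // i ≠ p} R) : (extendAt p A).det = A.det := by
  simp [extendAt]

lemma extendAt_submatrix {N : Matrix n n R} (hrow : Pi.single p 1 ᵥ* N = Pi.single p 1)
    (hcol : N *ᵥ Pi.single p 1 = Pi.single p 1) :
    extendAt p (N.submatrix (↑) (↑)) = N := by
  ext a b
  have hrow' := congrFun hrow b
  have hcol' := congrFun hcol a
  simp only [single_one_vecMul, mulVec_single_one] at hrow' hcol'
  rcases eq_or_ne a p with ha | ha <;> rcases eq_or_ne b p with hb | hb
  all_goals simp_all [extendAt, Equiv.sumCompl_symm_apply_of_pos, Equiv.sumCompl_symm_apply_of_neg]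

end ExtendAt

variable {n : Type*} [Fintype n] [DecidableEq n]

lemma transvec_mul_self {x y : n → ZMod 2} (h : y ⬝ᵥ x = 0) :
    transvec x y * transvec x y = 1 := by
  rw [transvec_mul_transvec_add_right h, ZModModule.add_self, transvec_zero_right]

lemma transvec_mul_transvec_mul_transvec {u w : n → ZMod 2} (h : w ⬝ᵥ u = 0) (x y : n → ZMod 2) :
    transvec u w * transvec x y * transvec u w =
      transvec (x + (w ⬝ᵥ x) • u) (y + (y ⬝ᵥ u) • w) := by
  rw [mul_transvec_mul (transvec_mul_self h), transvec_mulVec, vecMul_transvec]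

section StabGen

/-- `transvec (e i) (e j)` is the elementary matrix `X i j`, and `transvec (e i + e j) (e k)` is
the double elementary matrix `X i k * X j k`. -/
def stabGen (v : n → ZMod 2) : Submonoid (Matrix n n (ZMod 2)) :=
  Submonoid.closure
    ({A | ∃ i j, i ≠ j ∧ v i = 0 ∧ A = transvec (Pi.single i 1) (Pi.single j 1)} ∪
      {A | ∃ i j k, i ≠ j ∧ i ≠ k ∧ j ≠ k ∧ v i = 1 ∧ v j = 1 ∧
        A = transvec (Pi.single i 1 + Pi.single j 1) (Pi.single k 1)})

variable {v : n → ZMod 2}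

lemma transvec_single_single_mem_stabGen {i j : n} (hij : i ≠ j) (hi : v i = 0) :
    transvec (Pi.single i 1) (Pi.single j 1) ∈ stabGen v :=
  Submonoid.subset_closure (Or.inl ⟨i, j, hij, hi, rfl⟩)

lemma transvec_add_single_mem_stabGen {i j k : n} (hij : i ≠ j) (hik : i ≠ k) (hjk : j ≠ k)
    (hi : v i = 1) (hj : v j = 1) :
    transvec (Pi.single i 1 + Pi.single j 1) (Pi.single k 1) ∈ stabGen v :=
  Submonoid.subset_closure (Or.inr ⟨i, j, k, hij, hik, hjk, hi, hj, rfl⟩)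

lemma transvec_single_mem_stabGen {x : n → ZMod 2} {m : n} (hx : v ⬝ᵥ x = 0) (hm : x m = 0) :
    transvec x (Pi.single m 1) ∈ stabGen v := by
  obtain ⟨w, hwm, hw⟩ : ∃ w : n → ZMod 2, w m = 0 ∧
      ∀ a, a ≠ m → v a = 1 → transvec (Pi.single a 1 + w) (Pi.single m 1) ∈ stabGen v := by
    by_cases h : ∃ b, b ≠ m ∧ v b = 1
    · obtain ⟨b, hbm, hb⟩ := h
      refine ⟨Pi.single b 1, Pi.single_eq_of_ne hbm.symm 1, fun a ham ha => ?_⟩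
      rcases eq_or_ne a b with rfl | hab
      · simp [ZModModule.add_self]
      · exact transvec_add_single_mem_stabGen hab ham hbm ha hb
    · push Not at h
      exact ⟨0, rfl, fun a ham ha => absurd ha (h a ham)⟩
  rw [← sum_smul_single_add_smul_of_dotProduct_eq_zero (x := x) (by rwa [dotProduct_comm]) w]
  refine transvec_sum_left_mem _ _ fun a _ => ?_
  rcases ZMod.eq_zero_or_eq_one_of_two (x a) with hxa | hxa
  · simp [hxa]
  have ham : a ≠ m := by rintro rfl; simp [hm] at hxa
  rcases ZMod.eq_zero_or_eq_one_of_two (v a) with hva | hva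
  · simpa [hxa, hva, ham.symm] using transvec_single_single_mem_stabGen ham hva
  · simpa [hxa, hva, ham.symm, hwm] using hw a ham hva

lemma transvec_swap_mem_stabGen_of_eq_zero {a b : n} (hab : a ≠ b) (ha : v a = 0) (hb : v b = 0) :
    transvec (Pi.single a 1 + Pi.single b 1) (Pi.single a 1 + Pi.single b 1) ∈ stabGen v := by
  have h := mul_mem (mul_mem (transvec_single_single_mem_stabGen hab ha)
    (transvec_single_single_mem_stabGen hab.symm hb)) (transvec_single_single_mem_stabGen hab ha)
  rw [transvec_mul_transvec_mul_transvec (by simp [hab])] at h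
  convert h using 2 <;> simp [add_comm]

lemma transvec_swap_mem_stabGen_of_eq_one {a b c : n} (hab : a ≠ b) (hca : c ≠ a) (hcb : c ≠ b)
    (ha : v a = 1) (hb : v b = 1) :
    transvec (Pi.single a 1 + Pi.single b 1) (Pi.single a 1 + Pi.single b 1) ∈ stabGen v := by
  rcases ZMod.eq_zero_or_eq_one_of_two (v c) with hc | hc
  · have hU : transvec (Pi.single c 1) (Pi.single a 1 + Pi.single b 1) ∈ stabGen v := by
      rw [← transvec_mul_transvec_add_right (by simp [hca])]
      exact mul_mem (transvec_single_single_mem_stabGen hca hc)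
        (transvec_single_single_mem_stabGen hcb hc)
    have hD := transvec_add_single_mem_stabGen hab hca.symm hcb.symm ha hb
    have hUDU : transvec (Pi.single a 1 + Pi.single b 1)
        (Pi.single c 1 + (Pi.single a 1 + Pi.single b 1)) ∈ stabGen v := by
      have h := mul_mem (mul_mem hU hD) hU
      rw [transvec_mul_transvec_mul_transvec (by simp [hca, hcb])] at h
      convert h using 2 <;> simp [hab, hab.symm, ZModModule.add_self]
    have h := mul_mem hD hUDU
    rwa [transvec_mul_transvec_add_right (by simp [hca, hcb]), ← add_assoc,
      ZModModule.add_self, zero_add] at h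
  · have h := mul_mem (mul_mem (transvec_add_single_mem_stabGen hca.symm hab hcb ha hc)
      (transvec_add_single_mem_stabGen hcb.symm hab.symm hca hb hc))
      (transvec_add_single_mem_stabGen hca.symm hab hcb ha hc)
    rw [transvec_mul_transvec_mul_transvec (by simp [hab.symm, hcb])] at h
    convert h using 2 <;> simp [hcb.symm, hca.symm]
    rw [add_add_add_comm, ZModModule.add_self, add_zero, add_comm]

lemma transvec_triple_mem_stabGen {a b c : n} (hab : a ≠ b) (hac : a ≠ c) (hbc : b ≠ c)
    (ha : v a = 0) (hb : v b = 1) (hc : v c = 1) :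
    transvec (Pi.single a 1 + Pi.single b 1 + Pi.single c 1) (Pi.single a 1 + Pi.single b 1) ∈
      stabGen v := by
  have h := mul_mem (mul_mem (transvec_single_single_mem_stabGen hab ha)
    (transvec_add_single_mem_stabGen hbc hab.symm hac.symm hb hc))
    (transvec_single_single_mem_stabGen hab ha)
  rw [transvec_mul_transvec_mul_transvec (by simp [hab])] at h
  convert h using 2 <;> simp [hbc.symm]
  abel

lemma exists_transvec_pair_mem_stabGen (h3 : 3 ≤ Fintype.card n) {x : n → ZMod 2} {a b : n}
    (hab : a ≠ b) (hx : v ⬝ᵥ x = 0) (ha : x a = 1) (hb : x b = 1) :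
    ∃ q : n → ZMod 2, q a = 1 ∧ q b = 1 ∧ v ⬝ᵥ q = 0 ∧
      transvec q (Pi.single a 1 + Pi.single b 1) ∈ stabGen v := by
  rcases eq_or_ne (v a) (v b) with hv | hv
  · refine ⟨Pi.single a 1 + Pi.single b 1, by simp [hab.symm], by simp [hab],
      by simp [hv, ZModModule.add_self], ?_⟩
    rcases ZMod.eq_zero_or_eq_one_of_two (v a) with h | h
    · exact transvec_swap_mem_stabGen_of_eq_zero hab h (hv ▸ h)
    · obtain ⟨c, hca, hcb⟩ := ENat.exists_ne_ne_of_three_le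
        (by simpa [ENat.card_eq_coe_fintype_card] using h3) a b
      exact transvec_swap_mem_stabGen_of_eq_one hab hca hcb h (hv ▸ h)
  obtain ⟨c, hca, hcb, hc⟩ : ∃ c, c ≠ a ∧ c ≠ b ∧ v c * x c ≠ 0 := by
    by_contra! h
    have := Fintype.sum_eq_add a b hab fun c hc => h c hc.1 hc.2
    rw [← dotProduct, hx, ha, hb, mul_one, mul_one, eq_comm, ← ZModModule.sub_eq_add,
      sub_eq_zero] at this
    exact hv this
  have hvc := (ZMod.eq_zero_or_eq_one_of_two (v c)).resolve_left (left_ne_zero_of_mul hc)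
  rcases ZMod.eq_zero_or_eq_one_of_two (v a) with h | h
  · have hvb := (ZMod.eq_zero_or_eq_one_of_two (v b)).resolve_left (h ▸ hv.symm)
    exact ⟨Pi.single a 1 + Pi.single b 1 + Pi.single c 1, by simp [hab.symm, hca],
      by simp [hab, hcb], by simp [h, hvb, hvc, ZModModule.add_self],
      transvec_triple_mem_stabGen hab hca.symm hcb.symm h hvb hvc⟩
  · have hvb := (ZMod.eq_zero_or_eq_one_of_two (v b)).resolve_right (h ▸ hv.symm)
    refine ⟨Pi.single b 1 + Pi.single a 1 + Pi.single c 1, by simp [hab.symm, hca],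
      by simp [hab, hcb], by simp [h, hvb, hvc, ZModModule.add_self], ?_⟩
    rw [add_comm (Pi.single a 1)]
    exact transvec_triple_mem_stabGen hab.symm hcb.symm hca.symm hvb h hvc

lemma transvec_pair_mem_stabGen (h3 : 3 ≤ Fintype.card n) {x : n → ZMod 2} {a b : n}
    (hab : a ≠ b) (hx : v ⬝ᵥ x = 0) (ha : x a = 1) (hb : x b = 1) :
    transvec x (Pi.single a 1 + Pi.single b 1) ∈ stabGen v := by
  obtain ⟨q, hqa, hqb, hvq, hq⟩ := exists_transvec_pair_mem_stabGen h3 hab hx ha hb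
  have hxq : v ⬝ᵥ (x + q) = 0 := by rw [dotProduct_add, hx, hvq, add_zero]
  have hxqa : (x + q) a = 0 := by rw [Pi.add_apply, ha, hqa, ZModModule.add_self]
  have hxqb : (x + q) b = 0 := by rw [Pi.add_apply, hb, hqb, ZModModule.add_self]
  have hsplit : transvec x (Pi.single a 1 + Pi.single b 1) =
      transvec q (Pi.single a 1 + Pi.single b 1) *
        (transvec (x + q) (Pi.single a 1) * transvec (x + q) (Pi.single b 1)) := by
    rw [transvec_mul_transvec_add_right (by rwa [single_dotProduct, one_mul]),
      transvec_mul_transvec_add_left (by rw [add_dotProduct, single_dotProduct, single_dotProduct,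
        hxqa, hxqb, mul_zero, add_zero]), add_left_comm,
      ZModModule.add_self, add_zero]
  rw [hsplit]
  exact mul_mem hq (mul_mem (transvec_single_mem_stabGen hxq hxqa)
    (transvec_single_mem_stabGen hxq hxqb))

lemma transvec_mem_stabGen (h3 : 3 ≤ Fintype.card n) {x y : n → ZMod 2} (hyx : y ⬝ᵥ x = 0)
    (hvx : v ⬝ᵥ x = 0) : transvec x y ∈ stabGen v := by
  rcases eq_or_ne x 0 with rfl | hx0
  · simp
  obtain ⟨a, ha⟩ : ∃ a, x a = 1 := by
    obtain ⟨a, ha⟩ := Function.ne_iff.1 hx0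
    exact ⟨a, (ZMod.eq_zero_or_eq_one_of_two (x a)).resolve_left ha⟩
  rw [← sum_smul_single_add_smul_of_dotProduct_eq_zero hyx (Pi.single a 1)]
  refine transvec_sum_right_mem _ _ fun m _ => ?_
  rcases ZMod.eq_zero_or_eq_one_of_two (y m) with hym | hym
  · simp [hym]
  rcases ZMod.eq_zero_or_eq_one_of_two (x m) with hxm | hxm
  · simpa [hym, hxm] using transvec_single_mem_stabGen hvx hxm
  · rcases eq_or_ne m a with rfl | hma
    · simp [hym, hxm, ZModModule.add_self]
    · simpa [hym, hxm, ha, ZModModule.add_self] using transvec_pair_mem_stabGen h3 hma hvx hxm ha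

end StabGen

lemma mem_closure_range_transvectionStruct {A : Matrix n n (ZMod 2)} (hA : A.det ≠ 0) :
    A ∈ Submonoid.closure (Set.range (TransvectionStruct.toMatrix (n := n) (R := ZMod 2))) := by
  refine diagonal_transvection_induction_of_det_ne_zero _ A hA (fun D hD => ?_)
    (fun t => Submonoid.subset_closure ⟨t, rfl⟩) fun _ _ _ _ => mul_mem
  rw [det_diagonal, Finset.prod_ne_zero_iff] at hD
  have : D = 1 := funext fun i =>
    (ZMod.eq_zero_or_eq_one_of_two (D i)).resolve_left (hD i (Finset.mem_univ i))
  simp [this]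

lemma mem_closure_transvecsFixing_single_of_vecMul_eq {p : n} {N : Matrix n n (ZMod 2)}
    (hN : N.det ≠ 0) (hrow : Pi.single p 1 ᵥ* N = Pi.single p 1) :
    N ∈ Submonoid.closure (transvecsFixing (Pi.single p 1)) := by
  set c := N *ᵥ Pi.single p 1 + Pi.single p 1
  have hNpp : N p p = 1 := by simpa using congrFun hrow p
  have hc : Pi.single p 1 ⬝ᵥ c = 0 := by simp [c, hNpp, ZModModule.add_self]
  set C := transvec c (Pi.single p 1)
  have hCC : C * C = 1 := transvec_mul_self hc
  have hrow' : Pi.single p 1 ᵥ* (C * N) = Pi.single p 1 := by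
    rw [← vecMul_vecMul, vecMul_transvec, hc, zero_smul, add_zero, hrow]
  have hcol' : (C * N) *ᵥ Pi.single p 1 = Pi.single p 1 := by
    rw [← mulVec_mulVec, transvec_mulVec, dotProduct_mulVec, hrow]
    simp [c, add_comm, ← add_assoc, ZModModule.add_self]
  have hdet : (C * N).det ≠ 0 := by
    rw [det_mul]
    exact mul_ne_zero (det_ne_zero_of_right_inverse hCC) hN
  rw [← extendAt_submatrix p hrow' hcol', det_extendAt] at hdet
  have hle : Submonoid.closure (Set.range (TransvectionStruct.toMatrix (R := ZMod 2))) ≤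
      (Submonoid.closure (transvecsFixing (Pi.single p (1 : ZMod 2)))).comap (extendAt p) := by
    rw [Submonoid.closure_le]
    rintro _ ⟨t, rfl⟩
    have hij : (t.j : n) ≠ t.i := fun h => t.hij (Subtype.ext h.symm)
    rw [SetLike.mem_coe, Submonoid.mem_comap, extendAt_transvectionStruct, transvection_eq_transvec]
    exact Submonoid.subset_closure ⟨_, _, by simp [hij], by simp [t.i.2.symm], rfl⟩
  rw [← Matrix.one_mul N, ← hCC, Matrix.mul_assoc, ← extendAt_submatrix p hrow' hcol']
  exact mul_mem (Submonoid.subset_closure ⟨c, _, hc, hc, rfl⟩)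
    (hle (mem_closure_range_transvectionStruct hdet))

lemma exists_mul_self_eq_one_vecMul_eq_single {v : n → ZMod 2} {p : n} (hp : v p = 1) :
    ∃ g : Matrix n n (ZMod 2), g * g = 1 ∧ v ᵥ* g = Pi.single p 1 := by
  refine ⟨transvec (Pi.single p 1) (v + Pi.single p 1),
    transvec_mul_self (by simp [hp, ZModModule.add_self]), ?_⟩
  rw [vecMul_transvec, dotProduct_single, hp, mul_one, one_smul, ← add_assoc,
    ZModModule.add_self, zero_add]

lemma mem_closure_transvecsFixing_of_vecMul_eq {v : n → ZMod 2} {M : Matrix n n (ZMod 2)}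
    (hM : M.det ≠ 0) (hvM : v ᵥ* M = v) : M ∈ Submonoid.closure (transvecsFixing v) := by
  rcases eq_or_ne v 0 with rfl | hv
  · refine (Submonoid.closure_le.2 ?_) (mem_closure_range_transvectionStruct hM)
    rintro _ ⟨t, rfl⟩
    rw [TransvectionStruct.toMatrix_mk, transvection_eq_transvec]
    exact Submonoid.subset_closure ⟨_, _, by simp [t.hij.symm], zero_dotProduct _, rfl⟩
  obtain ⟨p, hp⟩ : ∃ p, v p = 1 := by
    obtain ⟨p, hp⟩ := Function.ne_iff.1 hv
    exact ⟨p, (ZMod.eq_zero_or_eq_one_of_two (v p)).resolve_left hp⟩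
  obtain ⟨g, hgg, hvg⟩ := exists_mul_self_eq_one_vecMul_eq_single hp
  have hpg : Pi.single p 1 ᵥ* g = v := by rw [← hvg, vecMul_vecMul, hgg, vecMul_one]
  have hg := det_ne_zero_of_right_inverse hgg
  have hN : (g * M * g).det ≠ 0 := by
    simp only [det_mul]
    exact mul_ne_zero (mul_ne_zero hg hM) hg
  have hrow : Pi.single p 1 ᵥ* (g * M * g) = Pi.single p 1 := by
    rw [← vecMul_vecMul, ← vecMul_vecMul, hpg, hvM, hvg]
  have h := mul_mem_closure_transvecsFixing_mul hgg
    (hvg ▸ mem_closure_transvecsFixing_single_of_vecMul_eq hN hrow)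
  rwa [← Matrix.mul_assoc, ← Matrix.mul_assoc, hgg, Matrix.one_mul, Matrix.mul_assoc, hgg,
    Matrix.mul_one] at h

end Matrix

section Generators

variable {r : ℕ}

lemma coe_X_toGL {i j : Fin r} (h : i ≠ j) :
    ((X i j h).toGL : Matrix (Fin r) (Fin r) (ZMod 2)) =
      transvec (Pi.single i 1) (Pi.single j 1) :=
  transvection_eq_transvec i j 1

lemma coe_X_mul_X_toGL {i j k : Fin r} (hik : i ≠ k) (hjk : j ≠ k) :
    ((X i k hik * X j k hjk).toGL : Matrix (Fin r) (Fin r) (ZMod 2)) =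
      transvec (Pi.single i 1 + Pi.single j 1) (Pi.single k 1) := by
  rw [map_mul, Units.val_mul, coe_X_toGL, coe_X_toGL,
    transvec_mul_transvec_add_left (by simp [hjk])]

lemma mem_S_of_coe_eq_transvec {v x y : Fin r → ZMod 2} {M : GL (Fin r) (ZMod 2)}
    (hM : (M : Matrix (Fin r) (Fin r) (ZMod 2)) = transvec x y) (hvx : v ⬝ᵥ x = 0) : M ∈ S v := by
  change v ᵥ* (M : Matrix (Fin r) (Fin r) (ZMod 2)) = v
  rw [hM, vecMul_transvec, hvx, zero_smul, add_zero]

lemma mem_of_coe_mem_stabGen {v : Fin r → ZMod 2} {H : Subgroup (GL (Fin r) (ZMod 2))}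
    (hX : ∀ i j (h : i ≠ j), v i = 0 → (X i j h).toGL ∈ H)
    (hXX : ∀ i j k (hik : i ≠ k) (hjk : j ≠ k), i ≠ j → v i = 1 → v j = 1 →
      (X i k hik * X j k hjk).toGL ∈ H)
    {M : GL (Fin r) (ZMod 2)} (hM : (M : Matrix (Fin r) (Fin r) (ZMod 2)) ∈ stabGen v) :
    M ∈ H := by
  have hle : stabGen v ≤ H.toSubmonoid.map (Units.coeHom _) := by
    rw [stabGen, Submonoid.closure_le]
    rintro _ (⟨i, j, hij, hi, rfl⟩ | ⟨i, j, k, hij, hik, hjk, hi, hj, rfl⟩)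
    · exact ⟨_, hX i j hij hi, coe_X_toGL hij⟩
    · exact ⟨_, hXX i j k hik hjk hij hi hj, coe_X_mul_X_toGL hik hjk⟩
  obtain ⟨U, hU, hUM⟩ := hle hM
  rwa [← Units.ext hUM]

end Generators

theorem stabilizer_generated_by_elementary_and_double_elementary
    (r : ℕ) (hr : 3 ≤ r) (v : Fin r → ZMod 2) :
    Subgroup.closure
      ({A | ∃ i j : Fin r, ∃ h : i ≠ j, v i = 0 ∧ A = (X i j h).toGL} ∪
       {A | ∃ i j k : Fin r, ∃ hik : i ≠ k, ∃ hjk : j ≠ k, i ≠ j ∧ v i = 1 ∧ v j = 1 ∧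
         A = (X i k hik * X j k hjk).toGL}) =
      S v := by
  apply le_antisymm
  · rw [Subgroup.closure_le]
    rintro _ (⟨i, j, h, hi, rfl⟩ | ⟨i, j, k, hik, hjk, -, hi, hj, rfl⟩)
    · exact mem_S_of_coe_eq_transvec (coe_X_toGL h) (by simp [hi])
    · exact mem_S_of_coe_eq_transvec (coe_X_mul_X_toGL hik hjk)
        (by simp [hi, hj, ZModModule.add_self])
  · intro M hM
    have hdet : (M : Matrix (Fin r) (Fin r) (ZMod 2)).det ≠ 0 :=
      ((isUnit_iff_isUnit_det _).1 M.isUnit).ne_zero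
    have hstab : Submonoid.closure (transvecsFixing v) ≤ stabGen v :=
      Submonoid.closure_le.2 fun _ ⟨_, _, hyx, hvx, hA⟩ =>
        hA ▸ transvec_mem_stabGen (by simpa using hr) hyx hvx
    exact mem_of_coe_mem_stabGen
      (fun i j h hi => Subgroup.subset_closure (Or.inl ⟨i, j, h, hi, rfl⟩))
      (fun i j k hik hjk hij hi hj =>
        Subgroup.subset_closure (Or.inr ⟨i, j, k, hik, hjk, hij, hi, hj, rfl⟩))
      (hstab (mem_closure_transvecsFixing_of_vecMul_eq hdet hM))
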